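/- Residuals of traces and braidings: suppose t : P ⟶ā R is a trace (a finite sequence of composable transitions with action sequence ā) and γ = φ ∘ σ : P ⋈ P' is a braiding, with σ the braid renaming and φ a braiding congruence. Then there exist a process R', a trace t/γ : P' ⟶(σ* ā) R' whose action sequence is the renaming of ā along σ (residuating σ through ā), and a braiding γ/t : R ⋈ R'. -/

import Mathlib

/-- Contexts are natural numbers; names in context `Γ` are de Bruijn indices below `Γ`. -/
abbrev Name (Γ : ℕ) : Type := Fin Γ

/-- The renaming `push : Fin Γ → Fin (Γ+1)` sends `x` to `x+1`, freeing the index `0`. -/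
def push {Γ : ℕ} (x : Name Γ) : Name (Γ + 1) := x.succ

/-- For `y : Fin Γ`, the renaming `pop y : Fin (Γ+1) → Fin Γ` sends `0` to `y` and `x+1` to `x`. -/
def pop {Γ : ℕ} (y : Name Γ) : Name (Γ + 1) → Name Γ
  | ⟨0, _⟩ => y
  | ⟨x + 1, h⟩ => ⟨x, Nat.lt_of_succ_lt_succ h⟩

/-- The renaming `swap : Fin (Γ+2) → Fin (Γ+2)` sends `0` to `1`, `1` to `0` and `x+2` to itself. -/
def swap {Γ : ℕ} : Name (Γ + 2) → Name (Γ + 2)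
  | ⟨0, _⟩ => ⟨1, by omega⟩
  | ⟨1, _⟩ => ⟨0, by omega⟩
  | ⟨x + 2, h⟩ => ⟨x + 2, h⟩

/-- The lift `suc ρ : Fin (Γ+1) → Fin (Δ+1)` of a renaming `ρ : Fin Γ → Fin Δ` sends
`0` to `0` and `x+1` to `(ρ x)+1`. -/
def sucR {Γ Δ : ℕ} (ρ : Name Γ → Name Δ) : Name (Γ + 1) → Name (Δ + 1)
  | ⟨0, _⟩ => ⟨0, Nat.succ_pos Δ⟩
  | ⟨x + 1, h⟩ => (ρ ⟨x, Nat.lt_of_succ_lt_succ h⟩).succ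

/-- Processes over the context `Γ`, in de Bruijn form. -/
inductive Proc : ℕ → Type where
  /-- The inactive process `0`. -/
  | nil : {Γ : ℕ} → Proc Γ
  /-- Input prefix `x.P` (binding one name). -/
  | input : {Γ : ℕ} → Name Γ → Proc (Γ + 1) → Proc Γ
  /-- Output prefix `x⟨y⟩.P`. -/
  | output : {Γ : ℕ} → Name Γ → Name Γ → Proc Γ → Proc Γ
  /-- Choice `P + Q`. -/
  | choice : {Γ : ℕ} → Proc Γ → Proc Γ → Proc Γ
  /-- Parallel composition `P ∣ Q`. -/
  | par : {Γ : ℕ} → Proc Γ → Proc Γ → Proc Γ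
  /-- Restriction `ν P` (binding one name). -/
  | nu : {Γ : ℕ} → Proc (Γ + 1) → Proc Γ
  /-- Replication `!P`. -/
  | rep : {Γ : ℕ} → Proc Γ → Proc Γ

/-- The functorial extension of a renaming to processes, going under the binders of
input and restriction via the lift `sucR`. -/
def Proc.rename : {Γ Δ : ℕ} → (Name Γ → Name Δ) → Proc Γ → Proc Δ
  | _, _, _, .nil => .nil
  | _, _, ρ, .input x P => .input (ρ x) (P.rename (sucR ρ))
  | _, _, ρ, .output x y P => .output (ρ x) (ρ y) (P.rename ρ)
  | _, _, ρ, .choice P Q => .choice (P.rename ρ) (Q.rename ρ)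
  | _, _, ρ, .par P Q => .par (P.rename ρ) (Q.rename ρ)
  | _, _, ρ, .nu P => .nu (P.rename (sucR ρ))
  | _, _, ρ, .rep P => .rep (P.rename ρ)
/-- Actions are either *bound* (input and bound output, whose target context gains a
fresh name) or *non-bound* (output and silent, whose target context is unchanged). -/
inductive ActTy : Type where
  | bound : ActTy
  | nonbound : ActTy

/-- The target context of an action of the given kind performed in context `Γ`. -/
def ActTy.tgt : ActTy → ℕ → ℕ
  | .bound, Γ => Γ + 1
  | .nonbound, Γ => Γ

attribute [reducible] ActTy.tgt

/-- Actions over the context `Γ`. -/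
inductive Act : ActTy → ℕ → Type where
  /-- Input `x`. -/
  | inp : {Γ : ℕ} → Name Γ → Act .bound Γ
  /-- Bound output `x⟨ν⟩` (output of a name whose scope is being extruded). -/
  | bout : {Γ : ℕ} → Name Γ → Act .bound Γ
  /-- Output `x⟨y⟩`. -/
  | out : {Γ : ℕ} → Name Γ → Name Γ → Act .nonbound Γ
  /-- Silent action `τ`. -/
  | tau : {Γ : ℕ} → Act .nonbound Γ

/-- The extension of a renaming to actions. -/
def Act.rename {Γ Δ : ℕ} (ρ : Name Γ → Name Δ) : {ty : ActTy} → Act ty Γ → Act ty Δ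
  | _, .inp x => .inp (ρ x)
  | _, .bout x => .bout (ρ x)
  | _, .out x y => .out (ρ x) (ρ y)
  | _, .tau => .tau

/-- The residual `ρ/a` of a renaming `ρ` after an action of kind `ty`:
`suc ρ` if the action is bound and `ρ` itself otherwise. -/
def resRen : (ty : ActTy) → {Γ Δ : ℕ} → (Name Γ → Name Δ) → Name (ty.tgt Γ) → Name (ty.tgt Δ)
  | .bound, _, _, ρ => sucR ρ
  | .nonbound, _, _, ρ => ρ
/-- The labelled transition relation, in proof-relevant form: an element of
`Tr P a R` is a derivation (a "proved transition") of `P ⟶a R`. -/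
inductive Tr : {Γ : ℕ} → {ty : ActTy} → Proc Γ → Act ty Γ → Proc (ActTy.tgt ty Γ) → Type where
  /-- `x.P  ⟶x  P`. -/
  | inp : {Γ : ℕ} → (x : Name Γ) → (P : Proc (Γ + 1)) →
      Tr (.input x P) (.inp x) P
  /-- `x⟨y⟩.P  ⟶x⟨y⟩  P`. -/
  | out : {Γ : ℕ} → (x y : Name Γ) → (P : Proc Γ) →
      Tr (.output x y P) (.out x y) P
  /-- Choose the left branch. -/
  | sumL : {Γ : ℕ} → {ty : ActTy} → {P : Proc Γ} → (Q : Proc Γ) → {a : Act ty Γ} →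
      {R : Proc (ActTy.tgt ty Γ)} → Tr P a R → Tr (.choice P Q) a R
  /-- Choose the right branch. -/
  | sumR : {Γ : ℕ} → {ty : ActTy} → (P : Proc Γ) → {Q : Proc Γ} → {a : Act ty Γ} →
      {R : Proc (ActTy.tgt ty Γ)} → Tr Q a R → Tr (.choice P Q) a R
  /-- Propagate a non-bound action through a parallel composition on the left. -/
  | parLC : {Γ : ℕ} → {P : Proc Γ} → (Q : Proc Γ) → {c : Act .nonbound Γ} → {R : Proc Γ} →
      Tr P c R → Tr (.par P Q) c (.par R Q)
  /-- Propagate a bound action through a parallel composition on the left,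
  reserving the fresh name `0` in the passive component via `push`. -/
  | parLB : {Γ : ℕ} → {P : Proc Γ} → (Q : Proc Γ) → {b : Act .bound Γ} → {R : Proc (Γ + 1)} →
      Tr P b R → Tr (.par P Q) b (.par R (Q.rename push))
  /-- Propagate a non-bound action through a parallel composition on the right. -/
  | parRC : {Γ : ℕ} → (P : Proc Γ) → {Q : Proc Γ} → {c : Act .nonbound Γ} → {S : Proc Γ} →
      Tr Q c S → Tr (.par P Q) c (.par P S)
  /-- Propagate a bound action through a parallel composition on the right. -/
  | parRB : {Γ : ℕ} → (P : Proc Γ) → {Q : Proc Γ} → {b : Act .bound Γ} → {S : Proc (Γ + 1)} →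
      Tr Q b S → Tr (.par P Q) b (.par (P.rename push) S)
  /-- Communication rendezvous, receiving `y` on the left. -/
  | comL : {Γ : ℕ} → {P Q : Proc Γ} → {x y : Name Γ} → {R : Proc (Γ + 1)} → {S : Proc Γ} →
      Tr P (.inp x) R → Tr Q (.out x y) S →
      Tr (.par P Q) .tau (.par (R.rename (pop y)) S)
  /-- Communication rendezvous, receiving `y` on the right. -/
  | comR : {Γ : ℕ} → {P Q : Proc Γ} → {x y : Name Γ} → {R : Proc Γ} → {S : Proc (Γ + 1)} →
      Tr P (.out x y) R → Tr Q (.inp x) S →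
      Tr (.par P Q) .tau (.par R (S.rename (pop y)))
  /-- Initiate extrusion of the scope of a `ν`-binder: an output `(x+1)⟨0⟩` under the
  binder becomes a bound output `x⟨ν⟩`. -/
  | extrude : {Γ : ℕ} → {P : Proc (Γ + 1)} → {x : Name Γ} → {R : Proc (Γ + 1)} →
      Tr P (.out (push x) 0) R → Tr (.nu P) (.bout x) R
  /-- Extrusion rendezvous ("close"), receiving the extruded name `0` on the left. -/
  | closeL : {Γ : ℕ} → {P Q : Proc Γ} → {x : Name Γ} → {R S : Proc (Γ + 1)} →
      Tr P (.inp x) R → Tr Q (.bout x) S →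
      Tr (.par P Q) .tau (.nu (.par R S))
  /-- Extrusion rendezvous ("close"), receiving the extruded name `0` on the right. -/
  | closeR : {Γ : ℕ} → {P Q : Proc Γ} → {x : Name Γ} → {R S : Proc (Γ + 1)} →
      Tr P (.bout x) R → Tr Q (.inp x) S →
      Tr (.par P Q) .tau (.nu (.par R S))
  /-- Propagate a non-bound action of the form `push* c` through a `ν`-binder. -/
  | nuC : {Γ : ℕ} → {P : Proc (Γ + 1)} → {c : Act .nonbound Γ} → {R : Proc (Γ + 1)} →
      Tr P (c.rename push) R → Tr (.nu P) c (.nu R)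
  /-- Propagate a bound action of the form `push* b` through a `ν`-binder,
  rewiring the target with the braid `swap`. -/
  | nuB : {Γ : ℕ} → {P : Proc (Γ + 1)} → {b : Act .bound Γ} → {R : Proc (Γ + 2)} →
      Tr P (b.rename push) R → Tr (.nu P) b (.nu (R.rename swap))
  /-- Replication. -/
  | rep : {Γ : ℕ} → {ty : ActTy} → {P : Proc Γ} → {a : Act ty Γ} → {R : Proc (ActTy.tgt ty Γ)} →
      Tr (.par P (.rep P)) a R → Tr (.rep P) a R
/-- Braiding congruence `P ≅ Q`: the congruence on processes generated by the braidings
`ν ν (swap* P) ≅ ν ν P` and `ν ν P ≅ ν ν (swap* P)`, transitivity, and closure under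
all process constructors. -/
inductive BC : {Γ : ℕ} → Proc Γ → Proc Γ → Type where
  /-- `ν ν (swap* P) ≅ ν ν P`. -/
  | nuSwap : {Γ : ℕ} → (P : Proc (Γ + 2)) → BC (.nu (.nu (P.rename swap))) (.nu (.nu P))
  /-- `ν ν P ≅ ν ν (swap* P)`. -/
  | nuSwapInv : {Γ : ℕ} → (P : Proc (Γ + 2)) → BC (.nu (.nu P)) (.nu (.nu (P.rename swap)))
  /-- Transitivity. -/
  | trans : {Γ : ℕ} → {P R S : Proc Γ} → BC P R → BC R S → BC P S
  /-- `0 ≅ 0`. -/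
  | nil : {Γ : ℕ} → BC (Proc.nil : Proc Γ) .nil
  /-- Compatibility with input prefix. -/
  | input : {Γ : ℕ} → (x : Name Γ) → {P R : Proc (Γ + 1)} → BC P R →
      BC (.input x P) (.input x R)
  /-- Compatibility with output prefix. -/
  | output : {Γ : ℕ} → (x y : Name Γ) → {P R : Proc Γ} → BC P R →
      BC (.output x y P) (.output x y R)
  /-- Compatibility with choice. -/
  | choice : {Γ : ℕ} → {P R Q S : Proc Γ} → BC P R → BC Q S →
      BC (.choice P Q) (.choice R S)
  /-- Compatibility with parallel composition. -/
  | par : {Γ : ℕ} → {P R Q S : Proc Γ} → BC P R → BC Q S →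
      BC (.par P Q) (.par R S)
  /-- Compatibility with restriction. -/
  | nu : {Γ : ℕ} → {P R : Proc (Γ + 1)} → BC P R → BC (.nu P) (.nu R)
  /-- Compatibility with replication. -/
  | rep : {Γ : ℕ} → {P R : Proc Γ} → BC P R → BC (.rep P) (.rep R)
/-- Finite sequences of composable actions, from context `Γ` to context `Δ`. -/
inductive ActSeq : ℕ → ℕ → Type where
  | nil : {Γ : ℕ} → ActSeq Γ Γ
  | cons : {Γ Δ : ℕ} → {ty : ActTy} → (a : Act ty Γ) → ActSeq (ActTy.tgt ty Γ) Δ → ActSeq Γ Δ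

/-- The residual `σ* ā` of an action sequence along an (endo-)renaming, residuating
the renaming through the sequence. -/
def ActSeq.rename : {Γ Δ : ℕ} → (Name Γ → Name Γ) → ActSeq Γ Δ → ActSeq Γ Δ
  | _, _, _, .nil => .nil
  | _, _, σ, .cons a as => .cons (a.rename σ) (as.rename (resRen _ σ))

/-- Traces: finite sequences of composable transitions, with their action sequence. -/
inductive Trace : {Γ Δ : ℕ} → Proc Γ → ActSeq Γ Δ → Proc Δ → Type where
  | nil : {Γ : ℕ} → (P : Proc Γ) → Trace P .nil P
  | cons : {Γ Δ : ℕ} → {ty : ActTy} → {P : Proc Γ} → {a : Act ty Γ} →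
      {R : Proc (ActTy.tgt ty Γ)} → {as : ActSeq (ActTy.tgt ty Γ) Δ} → {S : Proc Δ} →
      Tr P a R → Trace R as S → Trace P (.cons a as) S

/-- Braid renamings: `id` or `swap`, possibly shifted under a context extension. -/
inductive IsBraid : {n : ℕ} → (Name n → Name n) → Prop where
  | id : {n : ℕ} → IsBraid (fun x : Name n => x)
  | swp : {n : ℕ} → IsBraid (swap : Name (n + 2) → Name (n + 2))
  | suc : {n : ℕ} → {σ : Name n → Name n} → IsBraid σ → IsBraid (sucR σ)

/-!
A braiding `γ = φ ∘ σ` is applied to a transition in two stages. Transitions are stable under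
renaming, so `E/σ : σ* P ⟶(σ* a) (σ/a)* R`, and `σ/a` is again a braid. It then remains to
residuate a transition across a braiding congruence, one congruence step at a time. All cases
are structural except the generator `ν ν (swap* X) ≅ ν ν X`: the derivation below the two
binders is renamed by `swap`; an action passing both binders is matched up to the braid relation
between `swap` and `suc swap`, and an extrusion through one binder becomes an extrusion through
the other. Iterating along the trace gives the result.
-/

theorem sucR_comp {Γ Δ Θ : ℕ} (ρ : Name Γ → Name Δ) (ρ' : Name Δ → Name Θ) :
    sucR ρ' ∘ sucR ρ = sucR (ρ' ∘ ρ) := by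
  funext x; rcases x with ⟨_ | _, _⟩ <;> rfl

theorem sucR_id {Γ : ℕ} : sucR (id : Name Γ → Name Γ) = id := by
  funext x; rcases x with ⟨_ | _, _⟩ <;> rfl

theorem sucR_comp_push {Γ Δ : ℕ} (ρ : Name Γ → Name Δ) : sucR ρ ∘ push = push ∘ ρ := rfl

theorem pop_comp_sucR {Γ Δ : ℕ} (ρ : Name Γ → Name Δ) (y : Name Γ) :
    pop (ρ y) ∘ sucR ρ = ρ ∘ pop y := by
  funext x; rcases x with ⟨_ | _, _⟩ <;> rfl

theorem swap_comp_sucR_sucR {Γ Δ : ℕ} (ρ : Name Γ → Name Δ) :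
    swap ∘ sucR (sucR ρ) = sucR (sucR ρ) ∘ swap := by
  funext x; rcases x with ⟨_ | _ | _, _⟩ <;> rfl

theorem swap_comp_swap {Γ : ℕ} : (swap : Name (Γ + 2) → Name (Γ + 2)) ∘ swap = id := by
  funext x; rcases x with ⟨_ | _ | _, _⟩ <;> rfl

theorem swap_braid {Γ : ℕ} :
    (swap : Name (Γ + 3) → Name (Γ + 3)) ∘ sucR swap ∘ swap = sucR swap ∘ swap ∘ sucR swap := by
  funext x; rcases x with ⟨_ | _ | _ | _, _⟩ <;> rfl

namespace Proc

theorem rename_rename {Γ Δ Θ : ℕ} (P : Proc Γ) (ρ : Name Γ → Name Δ) (ρ' : Name Δ → Name Θ) :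
    (P.rename ρ).rename ρ' = P.rename (ρ' ∘ ρ) := by
  induction P generalizing Δ Θ <;> simp [Proc.rename, sucR_comp, *]

theorem rename_id {Γ : ℕ} (P : Proc Γ) : P.rename id = P := by
  induction P <;> simp [Proc.rename, sucR_id, *]

theorem rename_rename_comm {Γ Δ Δ' Θ : ℕ} (P : Proc Γ)
    {f : Name Γ → Name Δ} {g : Name Δ → Name Θ} {f' : Name Γ → Name Δ'} {g' : Name Δ' → Name Θ}
    (h : g ∘ f = g' ∘ f') : (P.rename f).rename g = (P.rename f').rename g' := by
  rw [rename_rename, rename_rename, h]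

theorem rename_swap_swap {Γ : ℕ} (P : Proc (Γ + 2)) : (P.rename swap).rename swap = P := by
  rw [rename_rename, swap_comp_swap, rename_id]

theorem rename_swap_braid {Γ : ℕ} (R : Proc (Γ + 3)) :
    ((R.rename (sucR swap)).rename swap).rename (sucR swap) =
      ((R.rename swap).rename (sucR swap)).rename swap := by
  simp only [rename_rename, swap_braid]

end Proc

theorem Act.rename_rename {Γ Δ Θ : ℕ} {ty : ActTy} (a : Act ty Γ) (ρ : Name Γ → Name Δ)
    (ρ' : Name Δ → Name Θ) : (a.rename ρ).rename ρ' = a.rename (ρ' ∘ ρ) := by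
  cases a <;> rfl

theorem Act.rename_rename_comm {Γ Δ Δ' Θ : ℕ} {ty : ActTy} (a : Act ty Γ)
    {f : Name Γ → Name Δ} {g : Name Δ → Name Θ} {f' : Name Γ → Name Δ'} {g' : Name Δ' → Name Θ}
    (h : g ∘ f = g' ∘ f') : (a.rename f).rename g = (a.rename f').rename g' := by
  rw [Act.rename_rename, Act.rename_rename, h]

theorem Act.rename_swap_push_push {Γ : ℕ} {ty : ActTy} (a : Act ty Γ) :
    ((a.rename push).rename push).rename swap = (a.rename push).rename push := by
  cases a <;> rfl

def Tr.castTarget {Γ : ℕ} {ty : ActTy} {P : Proc Γ} {a : Act ty Γ} {R R' : Proc (ty.tgt Γ)}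
    (h : R = R') (t : Tr P a R) : Tr P a R' :=
  h ▸ t

def Tr.rename : {Γ Δ : ℕ} → (ρ : Name Γ → Name Δ) → {ty : ActTy} → {P : Proc Γ} →
    {a : Act ty Γ} → {R : Proc (ty.tgt Γ)} → Tr P a R → Tr (P.rename ρ) (a.rename ρ) (R.rename (resRen ty ρ))
  | _, _, ρ, _, _, _, _, .inp x P => .inp (ρ x) (P.rename (sucR ρ))
  | _, _, ρ, _, _, _, _, .out x y P => .out (ρ x) (ρ y) (P.rename ρ)
  | _, _, ρ, _, _, _, _, .sumL Q t => .sumL _ (t.rename ρ)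
  | _, _, ρ, _, _, _, _, .sumR P t => .sumR _ (t.rename ρ)
  | _, _, ρ, _, _, _, _, .parLC Q t => .parLC _ (t.rename ρ)
  | _, _, ρ, _, _, _, _, .parLB Q t =>
      (Tr.parLB _ (t.rename ρ)).castTarget
        (congrArg (Proc.par _) (Proc.rename_rename_comm Q (sucR_comp_push ρ)).symm)
  | _, _, ρ, _, _, _, _, .parRC P t => .parRC _ (t.rename ρ)
  | _, _, ρ, _, _, _, _, .parRB P t =>
      (Tr.parRB _ (t.rename ρ)).castTarget
        (congrArg (Proc.par · _) (Proc.rename_rename_comm P (sucR_comp_push ρ)).symm)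
  | _, _, ρ, _, _, _, _, .comL (y := y) (R := R) tP tQ =>
      (Tr.comL (tP.rename ρ) (tQ.rename ρ)).castTarget
        (congrArg (Proc.par · _) (Proc.rename_rename_comm R (pop_comp_sucR ρ y)))
  | _, _, ρ, _, _, _, _, .comR (y := y) (S := S) tP tQ =>
      (Tr.comR (tP.rename ρ) (tQ.rename ρ)).castTarget
        (congrArg (Proc.par _) (Proc.rename_rename_comm S (pop_comp_sucR ρ y)))
  | _, _, ρ, _, _, _, _, .extrude t => .extrude (t.rename (sucR ρ))
  | _, _, ρ, _, _, _, _, .closeL tP tQ => .closeL (tP.rename ρ) (tQ.rename ρ)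
  | _, _, ρ, _, _, _, _, .closeR tP tQ => .closeR (tP.rename ρ) (tQ.rename ρ)
  | _, _, ρ, _, _, _, _, .nuC (c := c) t =>
      .nuC (Act.rename_rename_comm c (sucR_comp_push ρ) ▸ t.rename (sucR ρ))
  | _, _, ρ, _, _, _, _, .nuB (b := b) (R := R) t =>
      (Tr.nuB (Act.rename_rename_comm b (sucR_comp_push ρ) ▸ t.rename (sucR ρ))).castTarget
        (congrArg Proc.nu (Proc.rename_rename_comm R (swap_comp_sucR_sucR ρ)))
  | _, _, ρ, _, _, _, _, .rep t => .rep (t.rename ρ)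

def BC.refl : {Γ : ℕ} → (P : Proc Γ) → BC P P
  | _, .nil => .nil
  | _, .input x P => .input x (BC.refl P)
  | _, .output x y P => .output x y (BC.refl P)
  | _, .choice P Q => .choice (BC.refl P) (BC.refl Q)
  | _, .par P Q => .par (BC.refl P) (BC.refl Q)
  | _, .nu P => .nu (BC.refl P)
  | _, .rep P => .rep (BC.refl P)

def BC.rename : {Γ Δ : ℕ} → (ρ : Name Γ → Name Δ) → {P Q : Proc Γ} → BC P Q →
    BC (P.rename ρ) (Q.rename ρ)
  | _, _, ρ, _, _, .nuSwap P =>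
      (Proc.rename_rename_comm P (swap_comp_sucR_sucR ρ) ▸ .nuSwap _ :
        BC (.nu (.nu ((P.rename swap).rename (sucR (sucR ρ))))) _)
  | _, _, ρ, _, _, .nuSwapInv P =>
      (Proc.rename_rename_comm P (swap_comp_sucR_sucR ρ) ▸ .nuSwapInv _ :
        BC _ (.nu (.nu ((P.rename swap).rename (sucR (sucR ρ))))))
  | _, _, ρ, _, _, .trans φ ψ => .trans (φ.rename ρ) (ψ.rename ρ)
  | _, _, _, _, _, .nil => .nil
  | _, _, ρ, _, _, .input x φ => .input (ρ x) (φ.rename (sucR ρ))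
  | _, _, ρ, _, _, .output x y φ => .output (ρ x) (ρ y) (φ.rename ρ)
  | _, _, ρ, _, _, .choice φ ψ => .choice (φ.rename ρ) (ψ.rename ρ)
  | _, _, ρ, _, _, .par φ ψ => .par (φ.rename ρ) (ψ.rename ρ)
  | _, _, ρ, _, _, .nu φ => .nu (φ.rename (sucR ρ))
  | _, _, ρ, _, _, .rep φ => .rep (φ.rename ρ)

/-- Braiding congruence without transitivity. A transition is residuated across one step by
induction on the transition alone; across `BC.trans` one would have to residuate a residual. -/
inductive BCStep : {Γ : ℕ} → Proc Γ → Proc Γ → Prop where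
  | nuSwap : {Γ : ℕ} → (P : Proc (Γ + 2)) → BCStep (.nu (.nu (P.rename swap))) (.nu (.nu P))
  | nuSwapInv : {Γ : ℕ} → (P : Proc (Γ + 2)) → BCStep (.nu (.nu P)) (.nu (.nu (P.rename swap)))
  | nil : {Γ : ℕ} → BCStep (Proc.nil : Proc Γ) .nil
  | input : {Γ : ℕ} → (x : Name Γ) → {P R : Proc (Γ + 1)} → BCStep P R →
      BCStep (.input x P) (.input x R)
  | output : {Γ : ℕ} → (x y : Name Γ) → {P R : Proc Γ} → BCStep P R →
      BCStep (.output x y P) (.output x y R)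
  | choice : {Γ : ℕ} → {P R Q S : Proc Γ} → BCStep P R → BCStep Q S →
      BCStep (.choice P Q) (.choice R S)
  | par : {Γ : ℕ} → {P R Q S : Proc Γ} → BCStep P R → BCStep Q S →
      BCStep (.par P Q) (.par R S)
  | nu : {Γ : ℕ} → {P R : Proc (Γ + 1)} → BCStep P R → BCStep (.nu P) (.nu R)
  | rep : {Γ : ℕ} → {P R : Proc Γ} → BCStep P R → BCStep (.rep P) (.rep R)

namespace BCStep

theorem refl : ∀ {Γ : ℕ} (P : Proc Γ), BCStep P P
  | _, .nil => .nil
  | _, .input x P => .input x (refl P)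
  | _, .output x y P => .output x y (refl P)
  | _, .choice P Q => .choice (refl P) (refl Q)
  | _, .par P Q => .par (refl P) (refl Q)
  | _, .nu P => .nu (refl P)
  | _, .rep P => .rep (refl P)

theorem nonempty_bc {Γ : ℕ} {P Q : Proc Γ} (h : BCStep P Q) : Nonempty (BC P Q) := by
  induction h with
  | nuSwap P => exact ⟨.nuSwap P⟩
  | nuSwapInv P => exact ⟨.nuSwapInv P⟩
  | nil => exact ⟨.nil⟩
  | input x _ ih => exact ih.map (.input x)
  | output x y _ ih => exact ih.map (.output x y)
  | choice _ _ ih₁ ih₂ => exact ih₁.map2 .choice ih₂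
  | par _ _ ih₁ ih₂ => exact ih₁.map2 .par ih₂
  | nu _ ih => exact ih.map .nu
  | rep _ ih => exact ih.map .rep

end BCStep

open Relation in
theorem BC.reflTransGen_bcStep {Γ : ℕ} {P Q : Proc Γ} (φ : BC P Q) :
    ReflTransGen BCStep P Q := by
  induction φ with
  | nuSwap P => exact .single (.nuSwap P)
  | nuSwapInv P => exact .single (.nuSwapInv P)
  | trans _ _ ih₁ ih₂ => exact ih₁.trans ih₂
  | nil => exact .refl
  | input x _ ih => exact ih.lift _ fun _ _ => .input x
  | output x y _ ih => exact ih.lift _ fun _ _ => .output x y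
  | @choice _ P R Q S _ _ ih₁ ih₂ =>
    exact (ih₁.lift (Proc.choice · Q) fun _ _ h => .choice h (.refl Q)).trans
      (ih₂.lift (Proc.choice R ·) fun _ _ h => .choice (.refl R) h)
  | @par _ P R Q S _ _ ih₁ ih₂ =>
    exact (ih₁.lift (Proc.par · Q) fun _ _ h => .par h (.refl Q)).trans
      (ih₂.lift (Proc.par R ·) fun _ _ h => .par (.refl R) h)
  | nu _ ih => exact ih.lift _ fun _ _ => .nu
  | rep _ ih => exact ih.lift _ fun _ _ => .rep

theorem Tr.residual_nuSwap {Γ : ℕ} {ty : ActTy} (X : Proc (Γ + 2)) {a : Act ty Γ}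
    {T : Proc (ty.tgt Γ)} (t : Tr (.nu (.nu (X.rename swap))) a T) :
    ∃ T', Nonempty (Tr (.nu (.nu X)) a T') ∧ Nonempty (BC T T') := by
  have unswap {ty : ActTy} {a : Act ty (Γ + 2)} {R : Proc (ty.tgt (Γ + 2))}
      (t : Tr (X.rename swap) a R) : Tr X (a.rename swap) (R.rename (resRen ty swap)) :=
    X.rename_swap_swap ▸ t.rename swap
  cases t with
  | extrude t =>
    cases t with
    | nuC t =>
      exact ⟨_, ⟨(Tr.nuB (.extrude (unswap t))).castTarget
        (congrArg Proc.nu (Proc.rename_swap_swap _))⟩, ⟨BC.refl _⟩⟩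
  | nuC t =>
    cases t with
    | nuC t =>
      exact ⟨_, ⟨.nuC (.nuC (Act.rename_swap_push_push _ ▸ unswap t))⟩, ⟨.nuSwapInv _⟩⟩
  | @nuB _ _ b _ t =>
    cases b
    all_goals cases t
    case inp.nuB t | bout.nuB t =>
      refine ⟨_, ⟨.nuB (.nuB (Act.rename_swap_push_push _ ▸ unswap t))⟩, ⟨?_⟩⟩
      simp only [Proc.rename, resRen]
      rw [Proc.rename_swap_braid]
      exact .nuSwapInv _
    case bout.extrude t =>
      exact ⟨_, ⟨.extrude (.nuC (unswap t))⟩, ⟨BC.refl _⟩⟩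

theorem Tr.residual_nuSwapInv {Γ : ℕ} {ty : ActTy} (X : Proc (Γ + 2)) {a : Act ty Γ}
    {T : Proc (ty.tgt Γ)} (t : Tr (.nu (.nu X)) a T) :
    ∃ T', Nonempty (Tr (.nu (.nu (X.rename swap))) a T') ∧ Nonempty (BC T T') := by
  rw [← X.rename_swap_swap] at t
  exact Tr.residual_nuSwap (X.rename swap) t

theorem Tr.residual_bcStep {Γ : ℕ} {ty : ActTy} {P : Proc Γ} {a : Act ty Γ}
    {T : Proc (ty.tgt Γ)} (t : Tr P a T) {P' : Proc Γ} (h : BCStep P P') :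
    ∃ T', Nonempty (Tr P' a T') ∧ Nonempty (BC T T') := by
  induction t with
  | inp x P => cases h with
    | input x h => exact ⟨_, ⟨.inp _ _⟩, h.nonempty_bc⟩
  | out x y P => cases h with
    | output x y h => exact ⟨_, ⟨.out _ _ _⟩, h.nonempty_bc⟩
  | sumL Q t ih => cases h with
    | choice hP _ =>
      obtain ⟨T', ⟨t'⟩, φ⟩ := ih hP
      exact ⟨T', ⟨.sumL _ t'⟩, φ⟩
  | sumR P t ih => cases h with
    | choice _ hQ =>
      obtain ⟨T', ⟨t'⟩, φ⟩ := ih hQ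
      exact ⟨T', ⟨.sumR _ t'⟩, φ⟩
  | parLC Q t ih => cases h with
    | par hP hQ =>
      obtain ⟨R', ⟨t'⟩, ⟨φ⟩⟩ := ih hP
      exact ⟨_, ⟨.parLC _ t'⟩, hQ.nonempty_bc.map (.par φ)⟩
  | parLB Q t ih => cases h with
    | par hP hQ =>
      obtain ⟨R', ⟨t'⟩, ⟨φ⟩⟩ := ih hP
      exact ⟨_, ⟨.parLB _ t'⟩, hQ.nonempty_bc.map fun ψ => .par φ (ψ.rename push)⟩
  | parRC P t ih => cases h with
    | par hP hQ =>
      obtain ⟨S', ⟨t'⟩, ⟨ψ⟩⟩ := ih hQ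
      exact ⟨_, ⟨.parRC _ t'⟩, hP.nonempty_bc.map (.par · ψ)⟩
  | parRB P t ih => cases h with
    | par hP hQ =>
      obtain ⟨S', ⟨t'⟩, ⟨ψ⟩⟩ := ih hQ
      exact ⟨_, ⟨.parRB _ t'⟩, hP.nonempty_bc.map fun φ => .par (φ.rename push) ψ⟩
  | comL _ _ ihP ihQ => cases h with
    | par hP hQ =>
      obtain ⟨R', ⟨tP⟩, ⟨φ⟩⟩ := ihP hP
      obtain ⟨S', ⟨tQ⟩, ⟨ψ⟩⟩ := ihQ hQ
      exact ⟨_, ⟨.comL tP tQ⟩, ⟨.par (φ.rename (pop _)) ψ⟩⟩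
  | comR _ _ ihP ihQ => cases h with
    | par hP hQ =>
      obtain ⟨R', ⟨tP⟩, ⟨φ⟩⟩ := ihP hP
      obtain ⟨S', ⟨tQ⟩, ⟨ψ⟩⟩ := ihQ hQ
      exact ⟨_, ⟨.comR tP tQ⟩, ⟨.par φ (ψ.rename (pop _))⟩⟩
  | closeL _ _ ihP ihQ => cases h with
    | par hP hQ =>
      obtain ⟨R', ⟨tP⟩, ⟨φ⟩⟩ := ihP hP
      obtain ⟨S', ⟨tQ⟩, ⟨ψ⟩⟩ := ihQ hQ
      exact ⟨_, ⟨.closeL tP tQ⟩, ⟨.nu (.par φ ψ)⟩⟩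
  | closeR _ _ ihP ihQ => cases h with
    | par hP hQ =>
      obtain ⟨R', ⟨tP⟩, ⟨φ⟩⟩ := ihP hP
      obtain ⟨S', ⟨tQ⟩, ⟨ψ⟩⟩ := ihQ hQ
      exact ⟨_, ⟨.closeR tP tQ⟩, ⟨.nu (.par φ ψ)⟩⟩
  | extrude t ih => cases h with
    | nu h =>
      obtain ⟨R', ⟨t'⟩, φ⟩ := ih h
      exact ⟨R', ⟨.extrude t'⟩, φ⟩
    | nuSwap X => exact Tr.residual_nuSwap X (.extrude t)
    | nuSwapInv X => exact Tr.residual_nuSwapInv X (.extrude t)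
  | nuC t ih => cases h with
    | nu h =>
      obtain ⟨R', ⟨t'⟩, ⟨φ⟩⟩ := ih h
      exact ⟨_, ⟨.nuC t'⟩, ⟨.nu φ⟩⟩
    | nuSwap X => exact Tr.residual_nuSwap X (.nuC t)
    | nuSwapInv X => exact Tr.residual_nuSwapInv X (.nuC t)
  | nuB t ih => cases h with
    | nu h =>
      obtain ⟨R', ⟨t'⟩, ⟨φ⟩⟩ := ih h
      exact ⟨_, ⟨.nuB t'⟩, ⟨.nu (φ.rename swap)⟩⟩
    | nuSwap X => exact Tr.residual_nuSwap X (.nuB t)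
    | nuSwapInv X => exact Tr.residual_nuSwapInv X (.nuB t)
  | rep t ih => cases h with
    | rep h =>
      obtain ⟨T', ⟨t'⟩, φ⟩ := ih (.par h (.rep h))
      exact ⟨T', ⟨.rep t'⟩, φ⟩

theorem Tr.residual_bc {Γ : ℕ} {ty : ActTy} {P : Proc Γ} {a : Act ty Γ}
    {T : Proc (ty.tgt Γ)} (t : Tr P a T) {P' : Proc Γ} (φ : BC P P') :
    ∃ T', Nonempty (Tr P' a T') ∧ Nonempty (BC T T') := by
  have h := φ.reflTransGen_bcStep
  clear φ
  induction h with
  | refl => exact ⟨T, ⟨t⟩, ⟨BC.refl T⟩⟩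
  | tail _ h ih =>
    obtain ⟨T₁, ⟨t₁⟩, ⟨φ₁⟩⟩ := ih
    obtain ⟨T₂, t₂, ⟨φ₂⟩⟩ := t₁.residual_bcStep h
    exact ⟨T₂, t₂, ⟨φ₁.trans φ₂⟩⟩

theorem IsBraid.resRen {Γ : ℕ} {σ : Name Γ → Name Γ} (hσ : IsBraid σ) (ty : ActTy) :
    IsBraid (resRen ty σ) := by
  cases ty
  exacts [hσ.suc, hσ]

theorem Tr.residual_braiding {Γ : ℕ} {ty : ActTy} {P : Proc Γ} {a : Act ty Γ}
    {T : Proc (ty.tgt Γ)} (t : Tr P a T) (σ : Name Γ → Name Γ) {P' : Proc Γ}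
    (φ : BC (P.rename σ) P') :
    ∃ T', Nonempty (Tr P' (a.rename σ) T') ∧ Nonempty (BC (T.rename (resRen ty σ)) T') :=
  (t.rename σ).residual_bc φ

/-- Residuals of traces and braidings: given a trace `t : P ⟶ā R` and a braiding
`γ = φ ∘ σ : P ⋈ P'` (a braid renaming `σ` together with a braiding congruence
`φ : σ* P ≅ P'`), there exist a process `R'`, a trace `t/γ : P' ⟶(σ* ā) R'` whose
action sequence is the renaming of `ā` along `σ`, and a braiding `γ/t : R ⋈ R'`. -/
theorem Trace.residual_braiding {Γ Δ : ℕ} {P : Proc Γ} {as : ActSeq Γ Δ} {R : Proc Δ}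
    (t : Trace P as R) (σ : Name Γ → Name Γ) (hσ : IsBraid σ) {P' : Proc Γ}
    (φ : BC (P.rename σ) P') :
    ∃ R' : Proc Δ, Nonempty (Trace P' (as.rename σ) R') ∧
      ∃ σ' : Name Δ → Name Δ, IsBraid σ' ∧ Nonempty (BC (R.rename σ') R') := by
  induction t with
  | nil P => exact ⟨P', ⟨.nil P'⟩, σ, hσ, ⟨φ⟩⟩
  | @cons _ _ ty _ _ _ _ _ e _ ih =>
    obtain ⟨T', ⟨e'⟩, ⟨ψ⟩⟩ := e.residual_braiding σ φ
    obtain ⟨R', ⟨t'⟩, rest⟩ := ih (resRen ty σ) (hσ.resRen ty) ψ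
    exact ⟨R', ⟨.cons e' t'⟩, rest⟩
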